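/- The function d_LC(S₁, S₂) := ‖chol(L(S₁)) − chol(L(S₂))‖_F is a metric on Sym⁺(m), the map S ↦ chol(L(S)) is an isometric bijection from (Sym⁺(m), d_LC) onto the real vector space of m×m lower triangular matrices equipped with the Frobenius norm, and (Sym⁺(m), d_LC) is a complete metric space. -/

import Mathlib

/-!
By uniqueness of the Cholesky factor, and since `log` is a bijection `(0, ∞) → ℝ`, the map
`S ↦ chol(L(S))` is a bijection from `Sym⁺(m)` onto the lower triangular matrices, with inverse
`T ↦ L Lᵀ` for `L = ⌊T⌋ + exp(𝔻(T))`. The distance `d_LC` is the Frobenius distance pulled back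
along this bijection, so it inherits the metric axioms, and it is complete because the lower
triangular matrices form a closed subset of the complete space of all matrices.
-/

open Matrix Filter

noncomputable def frobNorm {m : ℕ} (A : Matrix (Fin m) (Fin m) ℝ) : ℝ :=
  Real.sqrt (∑ i, ∑ j, (A i j) ^ 2)

/-- For a lower triangular matrix `L`, `chol(L) := ⌊L⌋ + mlog(𝔻(L))` is the sum of the strictly
lower triangular part of `L` and the diagonal matrix whose `k`-th diagonal entry is
`log(L k k)`. -/
noncomputable def cholMap {m : ℕ} (L : Matrix (Fin m) (Fin m) ℝ) : Matrix (Fin m) (Fin m) ℝ :=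
  Matrix.of fun i j => if j < i then L i j else if i = j then Real.log (L i i) else 0

open Set Topology

attribute [local instance] Matrix.frobeniusNormedAddCommGroup Matrix.frobeniusNormedSpace

namespace Matrix

variable {n R : Type*} [Fintype n] [LinearOrder n]

structure IsCholeskyFactor [Semiring R] [PartialOrder R] (S L : Matrix n n R) : Prop where
  isLowerTriangular : L.IsLowerTriangular
  diag_pos : ∀ i, 0 < L i i
  eq_mul_transpose : S = L * Lᵀ

theorem IsLowerTriangular.mul_transpose_apply [NonUnitalNonAssocSemiring R] {L : Matrix n n R}
    (hL : L.IsLowerTriangular) (i j : n) :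
    (L * Lᵀ) i j = ∑ k with k < j, L i k * L j k + L i j * L j j := by
  rw [mul_apply, ← Finset.sum_filter_add_sum_filter_not _ (· < j)]
  congr 1
  refine Finset.sum_eq_single_of_mem j (by simp) fun k hk hkj => ?_
  rw [transpose_apply, hL ((not_lt.1 (Finset.mem_filter.1 hk).2).lt_of_ne' hkj), mul_zero]

section OrderedRing

variable [CommRing R] [LinearOrder R] [IsStrictOrderedRing R]

/-- By induction on the columns: given the earlier columns, column `j` of `L * Lᵀ` determines
`L j j ^ 2`, hence `L j j > 0`, and then each `L i j * L j j`. -/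
theorem IsLowerTriangular.eq_of_mul_transpose_eq {L M : Matrix n n R}
    (hL : L.IsLowerTriangular) (hM : M.IsLowerTriangular)
    (hLd : ∀ i, 0 < L i i) (hMd : ∀ i, 0 < M i i) (h : L * Lᵀ = M * Mᵀ) : L = M := by
  suffices ∀ j i, L i j = M i j from ext fun i j => this j i
  intro j
  induction j using WellFoundedLT.induction with
  | _ j ih =>
  have hcol : ∀ i, L i j * L j j = M i j * M j j := by
    intro i
    have hij := congrFun₂ h i j
    rw [hL.mul_transpose_apply, hM.mul_transpose_apply, Finset.sum_congr rfl fun k hk => by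
      rw [ih k (Finset.mem_filter.1 hk).2 i, ih k (Finset.mem_filter.1 hk).2 j]] at hij
    exact add_left_cancel hij
  have hdiag : L j j = M j j := (mul_self_inj (hLd j).le (hMd j).le).1 (hcol j)
  intro i
  exact mul_right_cancel₀ (hMd j).ne' (hdiag ▸ hcol i)

theorem IsCholeskyFactor.unique {S L M : Matrix n n R} (hL : S.IsCholeskyFactor L)
    (hM : S.IsCholeskyFactor M) : L = M :=
  hL.isLowerTriangular.eq_of_mul_transpose_eq hM.isLowerTriangular hL.diag_pos hM.diag_pos
    (hL.eq_mul_transpose.symm.trans hM.eq_mul_transpose)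

end OrderedRing

theorem IsLowerTriangular.posDef_mul_transpose {L : Matrix n n ℝ} (hL : L.IsLowerTriangular)
    (hLd : ∀ i, 0 < L i i) : (L * Lᵀ).PosDef := by
  classical
  have hdet : IsUnit L.det := by
    rw [det_of_isLowerTriangular L hL]
    exact (Finset.prod_pos fun i _ => hLd i).ne'.isUnit
  simpa only [conjTranspose_eq_transpose_of_trivial] using
    PosDef.mul_conjTranspose_self L (vecMul_injective_of_isUnit ((isUnit_iff_isUnit_det L).2 hdet))

end Matrix

theorem exists_tendsto_norm_sub_of_cauchy {α E : Type*} [SeminormedAddCommGroup E]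
    [CompleteSpace E] {φ : α → E} {s : Set α} {C : Set E} (hC : IsClosed C)
    (hmaps : MapsTo φ s C) (hsurj : SurjOn φ s C) {u : ℕ → α} (hu : ∀ n, u n ∈ s)
    (hcauchy : ∀ ε > 0, ∃ N, ∀ k ≥ N, ∀ l ≥ N, ‖φ (u k) - φ (u l)‖ < ε) :
    ∃ x ∈ s, Tendsto (fun n => ‖φ (u n) - φ x‖) atTop (𝓝 0) := by
  obtain ⟨y, hy⟩ := cauchySeq_tendsto_of_complete <|
    (Metric.cauchySeq_iff (u := fun n => φ (u n))).2 fun ε hε => by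
      simpa only [dist_eq_norm] using hcauchy ε hε
  obtain ⟨x, hx, rfl⟩ := hsurj (hC.mem_of_tendsto hy (.of_forall fun n => hmaps (hu n)))
  exact ⟨x, hx, tendsto_iff_norm_sub_tendsto_zero.1 hy⟩

section LogCholesky

variable {m : ℕ}

theorem frobNorm_eq_norm (A : Matrix (Fin m) (Fin m) ℝ) : frobNorm A = ‖A‖ := by
  simp only [frobNorm, frobenius_norm_def, Real.sqrt_eq_rpow, Real.norm_eq_abs,
    Real.rpow_two, sq_abs]

theorem cholMap_isLowerTriangular (L : Matrix (Fin m) (Fin m) ℝ) :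
    (cholMap L).IsLowerTriangular := fun i j (hij : i < j) => by
  simp [cholMap, hij.not_gt, hij.ne]

theorem cholMap_injOn :
    InjOn cholMap {L : Matrix (Fin m) (Fin m) ℝ | L.IsLowerTriangular ∧ ∀ i, 0 < L i i} := by
  rintro L₁ ⟨hL₁, hd₁⟩ L₂ ⟨hL₂, hd₂⟩ h
  ext i j
  have hij := congrFun₂ h i j
  simp only [cholMap, of_apply] at hij
  rcases lt_trichotomy j i with hji | rfl | hij'
  · simpa [hji] using hij
  · simpa using Real.log_injOn_pos (hd₁ j) (hd₂ j) (by simpa using hij)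
  · rw [hL₁ hij', hL₂ hij']

/-- `⌊T⌋ + exp(𝔻(T))`, the inverse of `cholMap` on lower triangular matrices. -/
noncomputable def cholMapInv (T : Matrix (Fin m) (Fin m) ℝ) : Matrix (Fin m) (Fin m) ℝ :=
  of fun i j => if i = j then Real.exp (T i i) else T i j

theorem cholMapInv_isLowerTriangular {T : Matrix (Fin m) (Fin m) ℝ} (hT : T.IsLowerTriangular) :
    (cholMapInv T).IsLowerTriangular := fun i j (hij : i < j) => by
  simp [cholMapInv, hij.ne, hT hij]

theorem cholMapInv_diag_pos (T : Matrix (Fin m) (Fin m) ℝ) (i : Fin m) :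
    0 < cholMapInv T i i := by
  simp [cholMapInv, Real.exp_pos]

theorem cholMap_cholMapInv {T : Matrix (Fin m) (Fin m) ℝ} (hT : T.IsLowerTriangular) :
    cholMap (cholMapInv T) = T := by
  ext i j
  rcases lt_trichotomy j i with hji | rfl | hij
  · simp [cholMap, cholMapInv, hji, hji.ne']
  · simp [cholMap, cholMapInv]
  · rw [cholMap_isLowerTriangular _ hij, hT hij]

variable {Lfac : Matrix (Fin m) (Fin m) ℝ → Matrix (Fin m) (Fin m) ℝ}

theorem injOn_cholMap_comp
    (hLfac : ∀ S : Matrix (Fin m) (Fin m) ℝ, S.PosDef → S.IsCholeskyFactor (Lfac S)) :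
    InjOn (fun S => cholMap (Lfac S)) {S | S.PosDef} := by
  intro S₁ h₁ S₂ h₂ h
  obtain ⟨hL₁, hd₁, hS₁⟩ := hLfac S₁ h₁
  obtain ⟨hL₂, hd₂, hS₂⟩ := hLfac S₂ h₂
  rw [hS₁, hS₂, cholMap_injOn ⟨hL₁, hd₁⟩ ⟨hL₂, hd₂⟩ h]

theorem surjOn_cholMap_comp
    (hLfac : ∀ S : Matrix (Fin m) (Fin m) ℝ, S.PosDef → S.IsCholeskyFactor (Lfac S)) :
    SurjOn (fun S => cholMap (Lfac S)) {S | S.PosDef} {T | T.IsLowerTriangular} := by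
  intro T hT
  have hL : (cholMapInv T * (cholMapInv T)ᵀ).IsCholeskyFactor (cholMapInv T) :=
    ⟨cholMapInv_isLowerTriangular hT, cholMapInv_diag_pos T, rfl⟩
  have hS := hL.isLowerTriangular.posDef_mul_transpose hL.diag_pos
  refine ⟨_, hS, show cholMap (Lfac _) = T from ?_⟩
  rw [(hLfac _ hS).unique hL, cholMap_cholMapInv hT]

end LogCholesky

theorem logCholesky_metric_complete_general (m : ℕ)
    (Lfac : Matrix (Fin m) (Fin m) ℝ → Matrix (Fin m) (Fin m) ℝ)
    (hLfac_lower : ∀ S : Matrix (Fin m) (Fin m) ℝ, S.PosDef →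
      ∀ i j : Fin m, i < j → Lfac S i j = 0)
    (hLfac_diag : ∀ S : Matrix (Fin m) (Fin m) ℝ, S.PosDef → ∀ i : Fin m, 0 < Lfac S i i)
    (hLfac_mul : ∀ S : Matrix (Fin m) (Fin m) ℝ, S.PosDef → S = Lfac S * (Lfac S)ᵀ)
    (dLC : Matrix (Fin m) (Fin m) ℝ → Matrix (Fin m) (Fin m) ℝ → ℝ)
    (hdLC : ∀ S₁ S₂, dLC S₁ S₂ = frobNorm (cholMap (Lfac S₁) - cholMap (Lfac S₂))) :
    -- d_LC is a metric on Sym⁺(m):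
    (∀ S₁ S₂ : Matrix (Fin m) (Fin m) ℝ, S₁.PosDef → S₂.PosDef → 0 ≤ dLC S₁ S₂) ∧
    (∀ S₁ S₂ : Matrix (Fin m) (Fin m) ℝ, S₁.PosDef → S₂.PosDef →
      (dLC S₁ S₂ = 0 ↔ S₁ = S₂)) ∧
    (∀ S₁ S₂ : Matrix (Fin m) (Fin m) ℝ, S₁.PosDef → S₂.PosDef → dLC S₁ S₂ = dLC S₂ S₁) ∧
    (∀ S₁ S₂ S₃ : Matrix (Fin m) (Fin m) ℝ, S₁.PosDef → S₂.PosDef → S₃.PosDef →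
      dLC S₁ S₃ ≤ dLC S₁ S₂ + dLC S₂ S₃) ∧
    -- S ↦ chol(L(S)) is an isometry onto the space of lower triangular matrices:
    (∀ S₁ S₂ : Matrix (Fin m) (Fin m) ℝ, S₁.PosDef → S₂.PosDef →
      dLC S₁ S₂ = frobNorm (cholMap (Lfac S₁) - cholMap (Lfac S₂))) ∧
    (∀ S : Matrix (Fin m) (Fin m) ℝ, S.PosDef →
      ∀ i j : Fin m, i < j → cholMap (Lfac S) i j = 0) ∧
    -- it is injective on Sym⁺(m) and surjective onto lower triangular matrices:
    (∀ S₁ S₂ : Matrix (Fin m) (Fin m) ℝ, S₁.PosDef → S₂.PosDef →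
      cholMap (Lfac S₁) = cholMap (Lfac S₂) → S₁ = S₂) ∧
    (∀ T : Matrix (Fin m) (Fin m) ℝ, (∀ i j : Fin m, i < j → T i j = 0) →
      ∃ S : Matrix (Fin m) (Fin m) ℝ, S.PosDef ∧ cholMap (Lfac S) = T) ∧
    -- completeness: every d_LC-Cauchy sequence in Sym⁺(m) converges in Sym⁺(m)
    (∀ S : ℕ → Matrix (Fin m) (Fin m) ℝ, (∀ n, (S n).PosDef) →
      (∀ ε : ℝ, 0 < ε → ∃ N : ℕ, ∀ k ≥ N, ∀ l ≥ N, dLC (S k) (S l) < ε) →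
      ∃ T : Matrix (Fin m) (Fin m) ℝ, T.PosDef ∧
        Tendsto (fun n => dLC (S n) T) atTop (nhds 0)) := by
  have hLfac : ∀ S : Matrix (Fin m) (Fin m) ℝ, S.PosDef → S.IsCholeskyFactor (Lfac S) :=
    fun S hS => ⟨fun i j => hLfac_lower S hS i j, hLfac_diag S hS, hLfac_mul S hS⟩
  have hd : ∀ S₁ S₂, dLC S₁ S₂ = ‖cholMap (Lfac S₁) - cholMap (Lfac S₂)‖ :=
    fun S₁ S₂ => (hdLC S₁ S₂).trans (frobNorm_eq_norm _)
  have hinj := injOn_cholMap_comp hLfac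
  have hsurj := surjOn_cholMap_comp hLfac
  refine ⟨fun S₁ S₂ _ _ => (hd S₁ S₂).symm ▸ norm_nonneg _, fun S₁ S₂ h₁ h₂ => ?_,
    fun S₁ S₂ _ _ => by rw [hd, hd, norm_sub_rev],
    fun S₁ S₂ S₃ _ _ _ => by simpa only [hd] using norm_sub_le_norm_sub_add_norm_sub _ _ _,
    fun S₁ S₂ _ _ => hdLC S₁ S₂, fun S _ i j hij => cholMap_isLowerTriangular _ hij,
    fun S₁ S₂ h₁ h₂ h => hinj h₁ h₂ h, fun T hT => hsurj fun i j => hT i j,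
    fun S hS hcauchy => ?_⟩
  · rw [hd, norm_sub_eq_zero_iff]
    exact ⟨hinj h₁ h₂, congrArg fun S => cholMap (Lfac S)⟩
  · have : CompleteSpace (Matrix (Fin m) (Fin m) ℝ) := FiniteDimensional.complete ℝ _
    simpa only [hd, mem_ofPred_eq] using
      exists_tendsto_norm_sub_of_cauchy isClosed_setOfPred_blockTriangular
        (fun S _ => cholMap_isLowerTriangular (Lfac S)) hsurj hS (by simpa only [hd] using hcauchy)

/-- `d_LC(S₁,S₂) := ‖chol(L(S₁)) − chol(L(S₂))‖_F` is a metric on `Sym⁺(m)` (where `L(S)` is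
the Cholesky factor of `S`), the map `S ↦ chol(L(S))` is an isometric bijection from
`(Sym⁺(m), d_LC)` onto the real vector space of `m × m` lower triangular matrices equipped
with the Frobenius norm, and `(Sym⁺(m), d_LC)` is a complete metric space. -/
theorem logCholesky_metric_complete (m : ℕ) (hm : 0 < m)
    (Lfac : Matrix (Fin m) (Fin m) ℝ → Matrix (Fin m) (Fin m) ℝ)
    (hLfac_lower : ∀ S : Matrix (Fin m) (Fin m) ℝ, S.PosDef →
      ∀ i j : Fin m, i < j → Lfac S i j = 0)
    (hLfac_diag : ∀ S : Matrix (Fin m) (Fin m) ℝ, S.PosDef → ∀ i : Fin m, 0 < Lfac S i i)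
    (hLfac_mul : ∀ S : Matrix (Fin m) (Fin m) ℝ, S.PosDef → S = Lfac S * (Lfac S)ᵀ)
    (dLC : Matrix (Fin m) (Fin m) ℝ → Matrix (Fin m) (Fin m) ℝ → ℝ)
    (hdLC : ∀ S₁ S₂, dLC S₁ S₂ = frobNorm (cholMap (Lfac S₁) - cholMap (Lfac S₂))) :
    -- d_LC is a metric on Sym⁺(m):
    (∀ S₁ S₂ : Matrix (Fin m) (Fin m) ℝ, S₁.PosDef → S₂.PosDef → 0 ≤ dLC S₁ S₂) ∧
    (∀ S₁ S₂ : Matrix (Fin m) (Fin m) ℝ, S₁.PosDef → S₂.PosDef →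
      (dLC S₁ S₂ = 0 ↔ S₁ = S₂)) ∧
    (∀ S₁ S₂ : Matrix (Fin m) (Fin m) ℝ, S₁.PosDef → S₂.PosDef → dLC S₁ S₂ = dLC S₂ S₁) ∧
    (∀ S₁ S₂ S₃ : Matrix (Fin m) (Fin m) ℝ, S₁.PosDef → S₂.PosDef → S₃.PosDef →
      dLC S₁ S₃ ≤ dLC S₁ S₂ + dLC S₂ S₃) ∧
    -- S ↦ chol(L(S)) is an isometry onto the space of lower triangular matrices:
    (∀ S₁ S₂ : Matrix (Fin m) (Fin m) ℝ, S₁.PosDef → S₂.PosDef →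
      dLC S₁ S₂ = frobNorm (cholMap (Lfac S₁) - cholMap (Lfac S₂))) ∧
    (∀ S : Matrix (Fin m) (Fin m) ℝ, S.PosDef →
      ∀ i j : Fin m, i < j → cholMap (Lfac S) i j = 0) ∧
    -- it is injective on Sym⁺(m) and surjective onto lower triangular matrices:
    (∀ S₁ S₂ : Matrix (Fin m) (Fin m) ℝ, S₁.PosDef → S₂.PosDef →
      cholMap (Lfac S₁) = cholMap (Lfac S₂) → S₁ = S₂) ∧
    (∀ T : Matrix (Fin m) (Fin m) ℝ, (∀ i j : Fin m, i < j → T i j = 0) →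
      ∃ S : Matrix (Fin m) (Fin m) ℝ, S.PosDef ∧ cholMap (Lfac S) = T) ∧
    -- completeness: every d_LC-Cauchy sequence in Sym⁺(m) converges in Sym⁺(m)
    (∀ S : ℕ → Matrix (Fin m) (Fin m) ℝ, (∀ n, (S n).PosDef) →
      (∀ ε : ℝ, 0 < ε → ∃ N : ℕ, ∀ k ≥ N, ∀ l ≥ N, dLC (S k) (S l) < ε) →
      ∃ T : Matrix (Fin m) (Fin m) ℝ, T.PosDef ∧
        Tendsto (fun n => dLC (S n) T) atTop (nhds 0)) :=
  logCholesky_metric_complete_general m Lfac hLfac_lower hLfac_diag hLfac_mul dLC hdLC
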